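/- arXiv:2205.00607 — 6 statements merged into one kernel-verified Lean document; each statement's English description precedes it below -/
import Mathlib

section
/- Let G be a finite abelian group isomorphic to (ℤ/Nℤ)^r and let H ⊆ G be a subgroup of index I ≤ N - 1. Then H contains a subgroup isomorphic to (ℤ/N'ℤ)^r for some integer N' ≥ N / I. -/
/-- Let `G ≅ (ℤ/Nℤ)^r` and let `H ⊆ G` be a subgroup of index `I ≤ N - 1`.
Then `H` contains a subgroup isomorphic to `(ℤ/N'ℤ)^r` for some `N' ≥ N / I`. -/
theorem stmt0 (N r : ℕ) (hN : 0 < N)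
    (H : AddSubgroup (Fin r → ZMod N)) (hI : H.index ≤ N - 1) :
    ∃ N' : ℕ, N ≤ N' * H.index ∧
      ∃ K : AddSubgroup (Fin r → ZMod N), K ≤ H ∧
        Nonempty (K ≃+ (Fin r → ZMod N')) := by
  haveI : NeZero N := ⟨hN.ne'⟩
  set I := H.index with hIdef
  have hI0 : 0 < I := Nat.pos_of_ne_zero (AddSubgroup.index_ne_zero_of_finite)
  set d := Nat.gcd N I with hd
  have hdN : d ∣ N := Nat.gcd_dvd_left N I
  have hdI : d ∣ I := Nat.gcd_dvd_right N I
  have hd0 : 0 < d := Nat.gcd_pos_of_pos_left I hN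
  set N' := N / d with hN'def
  have hdN' : d * N' = N := Nat.mul_div_cancel' hdN
  have hN'0 : 0 < N' := Nat.div_pos (Nat.le_of_dvd hN hdN) hd0
  haveI : NeZero N' := ⟨hN'0.ne'⟩
  refine ⟨N', ?_, ?_⟩
  · calc N = d * N' := hdN'.symm
      _ ≤ I * N' := Nat.mul_le_mul_right _ (Nat.le_of_dvd hI0 hdI)
      _ = N' * I := Nat.mul_comm _ _
  -- the embedding ZMod N' →+ ZMod N, x ↦ d * x
  have hfN' : (AddMonoidHom.mulLeft (d : ZMod N)).comp (Int.castAddHom (ZMod N)) (N' : ℤ) = 0 := by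
    simp only [AddMonoidHom.coe_comp, Function.comp_apply, Int.coe_castAddHom,
      AddMonoidHom.coe_mulLeft]
    push_cast
    rw [← Nat.cast_mul, hdN', ZMod.natCast_self]
  set ψ : ZMod N' →+ ZMod N := ZMod.lift N' ⟨_, hfN'⟩ with hψdef
  have hψ_apply : ∀ m : ℤ, ψ ((m : ℤ) : ZMod N') = (d : ZMod N) * ((m : ℤ) : ZMod N) := by
    intro m
    simp [hψdef]
  have hval : ∀ x : ZMod N', ((x.val : ℤ) : ZMod N') = x := by
    intro x
    push_cast
    exact ZMod.natCast_rightInverse x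
  have hψinj : Function.Injective ψ := by
    rw [injective_iff_map_eq_zero]
    intro x hx
    rw [← hval x, hψ_apply] at hx
    have h2 : ((d * x.val : ℤ) : ZMod N) = 0 := by push_cast; rw [← hx]; push_cast; ring
    rw [ZMod.intCast_zmod_eq_zero_iff_dvd] at h2
    have hdvd : N ∣ d * x.val := by exact_mod_cast h2
    rw [← hdN'] at hdvd
    have h3 : N' ∣ x.val := (mul_dvd_mul_iff_left hd0.ne').mp hdvd
    have h4 : x.val = 0 := Nat.eq_zero_of_dvd_of_lt h3 (ZMod.val_lt x)
    rw [← hval x, h4]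
    simp
  -- componentwise map
  set φ : (Fin r → ZMod N') →+ (Fin r → ZMod N) :=
    AddMonoidHom.mk' (fun g i => ψ (g i)) (by intro a b; funext i; simp) with hφdef
  have hφinj : Function.Injective φ := fun a b h => funext fun i => hψinj (congrFun h i)
  refine ⟨φ.range, ?_, ⟨(AddMonoidHom.ofInjective (f := φ) hφinj).symm⟩⟩
  rintro y ⟨x, rfl⟩
  -- Bezout: (d : ZMod N) = I * b
  have hbez : (d : ℤ) = N * Nat.gcdA N I + I * Nat.gcdB N I := Nat.gcd_eq_gcd_ab N I
  have hdZ : (d : ZMod N) = (I : ZMod N) * ((Nat.gcdB N I : ℤ) : ZMod N) := by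
    have h5 := congrArg (fun z : ℤ => (z : ZMod N)) hbez
    push_cast at h5
    simpa using h5
  set z : Fin r → ZMod N :=
    fun i => ((Nat.gcdB N I : ℤ) : ZMod N) * (((x i).val : ℤ) : ZMod N) with hz
  have hφx : φ x = I • z := by
    funext i
    have : φ x i = ψ (x i) := rfl
    rw [this, ← hval (x i), hψ_apply, hdZ]
    have : (I • z) i = (I : ZMod N) * z i := by
      simp [Pi.smul_apply, nsmul_eq_mul]
    rw [this, hz]
    ring
  rw [hφx, hIdef]
  exact H.nsmul_index_mem z
end

section
/- Let G ≅ (ℤ/Nℤ)^r and H ⊆ G a subgroup with index at most N - 1. Then H cannot be generated by fewer than r elements. -/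
/-! A subgroup generated by `s` elements of a `ℤ/Nℤ`-module has at most `N ^ s` elements, since it
is the image of `(ℤ/Nℤ)^s`. Hence `N ^ r = |H| · [G : H] ≤ N ^ s (N - 1) < N ^ (s + 1)`. -/

theorem Nat.le_of_pow_le_pow_mul_pred {N r s : ℕ} (hN : 0 < N) (h : N ^ r ≤ N ^ s * (N - 1)) :
    r ≤ s := by
  by_contra! hsr
  have hlt : N ^ s * (N - 1) < N ^ (s + 1) := by
    rw [pow_succ]
    exact Nat.mul_lt_mul_of_pos_left (by omega) (pow_pos hN s)
  have hle : N ^ (s + 1) ≤ N ^ r := Nat.pow_le_pow_right hN hsr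
  omega

theorem Submodule.card_span_finset_le {R M : Type*} [Semiring R] [Finite R] [AddCommMonoid M]
    [Module R M] (S : Finset M) : Nat.card (span R (S : Set M)) ≤ Nat.card R ^ S.card := by
  let f := Fintype.linearCombination R (Subtype.val : ↥(S : Set M) → M)
  have hrange : LinearMap.range f = span R (S : Set M) := by
    rw [Fintype.range_linearCombination, Subtype.range_val]
  calc Nat.card (span R (S : Set M))
      = Nat.card (LinearMap.range f) := by rw [hrange]
    _ ≤ Nat.card (↥(S : Set M) → R) :=
        Nat.card_le_card_of_surjective _ f.surjective_rangeRestrict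
    _ = Nat.card R ^ S.card := by simp [Nat.card_fun]

theorem AddSubgroup.toZModSubmodule_closure {N : ℕ} {M : Type*} [AddCommGroup M]
    [Module (ZMod N) M] (s : Set M) : toZModSubmodule N (closure s) = Submodule.span (ZMod N) s :=
  le_antisymm (fun _ hx ↦ (closure_le (Submodule.span (ZMod N) s).toAddSubgroup).mpr
      Submodule.subset_span hx)
    (Submodule.span_le.mpr subset_closure)

theorem AddSubgroup.card_closure_finset_le {N : ℕ} [NeZero N] {M : Type*} [AddCommGroup M]
    [Module (ZMod N) M] (S : Finset M) : Nat.card (closure (S : Set M)) ≤ N ^ S.card := by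
  have h := Submodule.card_span_finset_le (R := ZMod N) S
  rwa [← toZModSubmodule_closure, Nat.card_zmod] at h

/-- Let `G ≅ (ℤ/Nℤ)^r` and `H ⊆ G` a subgroup of index at most `N - 1`.
Then `H` cannot be generated by fewer than `r` elements. -/
theorem stmt2 (N r : ℕ) (hN : 0 < N)
    (H : AddSubgroup (Fin r → ZMod N)) (hI : H.index ≤ N - 1)
    (S : Finset (Fin r → ZMod N)) (hgen : AddSubgroup.closure (S : Set (Fin r → ZMod N)) = H) :
    r ≤ S.card := by
  have : NeZero N := ⟨hN.ne'⟩
  have hcard : Nat.card H * H.index = N ^ r := by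
    rw [AddSubgroup.card_mul_index, Nat.card_fun, Nat.card_zmod, Nat.card_eq_fintype_card,
      Fintype.card_fin]
  refine Nat.le_of_pow_le_pow_mul_pred hN ?_
  rw [← hcard]
  exact Nat.mul_le_mul (hgen ▸ AddSubgroup.card_closure_finset_le S) hI
end

section
/- Let H ⊆ (ℤ/Nℤ)^r be a subgroup and let the quotient G/H decompose with invariant factors M_1 | ... | M_r. If H has invariant factors N_1 | ... | N_r (with N_i dividing N), then M_j = N / N_{r+1-j} for each j; in particular |H| · |G/H| = N^r. -/
open Finset

/-- The `n`-torsion subgroup. -/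
def tor (A : Type*) [AddCommGroup A] (n : ℕ) : AddSubgroup A where
  carrier := {a | n • a = 0}
  add_mem' := by intro a b ha hb; simp only [Set.mem_setOf_eq, smul_add] at *; rw [ha, hb, add_zero]
  zero_mem' := by simp
  neg_mem' := by intro a ha; simp only [Set.mem_setOf_eq, smul_neg] at *; rw [ha, neg_zero]

lemma mem_tor {A : Type*} [AddCommGroup A] {n : ℕ} {a : A} : a ∈ tor A n ↔ n • a = 0 := Iff.rfl

lemma tor_card_congr {A B : Type*} [AddCommGroup A] [AddCommGroup B] (e : A ≃+ B) (n : ℕ) :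
    Nat.card (tor A n) = Nat.card (tor B n) := by
  apply Nat.card_congr
  refine e.toEquiv.subtypeEquiv (fun a => ?_)
  simp only [mem_tor, AddEquiv.toEquiv_eq_coe, EquivLike.coe_coe]
  rw [← map_nsmul]
  exact ⟨fun h => by rw [h, map_zero], fun h => e.injective (by rw [h, map_zero])⟩

lemma card_tor_zmod (d n : ℕ) (hd : 0 < d) : Nat.card (tor (ZMod d) n) = Nat.gcd n d := by
  haveI : NeZero d := ⟨hd.ne'⟩
  set φ : ZMod d →+ ZMod d := AddMonoidHom.mulLeft (n : ZMod d) with hφ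
  have hker : φ.ker = tor (ZMod d) n := by
    ext x
    simp [hφ, AddMonoidHom.mem_ker, mem_tor, nsmul_eq_mul]
  have hrange : φ.range = AddSubgroup.zmultiples (n : ZMod d) := by
    ext x
    constructor
    · rintro ⟨y, rfl⟩
      simp only [hφ, AddMonoidHom.coe_mulLeft]
      refine ⟨(y.val : ℤ), ?_⟩
      push_cast [zsmul_eq_mul, ZMod.natCast_val, ZMod.intCast_cast, ZMod.cast_id]
      exact mul_comm _ _
    · rintro ⟨k, rfl⟩
      exact ⟨(k : ZMod d), by simp [hφ, zsmul_eq_mul, mul_comm]⟩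
  have h1 : Nat.card (ZMod d) = Nat.card (ZMod d ⧸ φ.ker) * Nat.card φ.ker :=
    AddSubgroup.card_eq_card_quotient_mul_card_addSubgroup _
  have h2 : Nat.card (ZMod d ⧸ φ.ker) = Nat.card φ.range :=
    Nat.card_congr (QuotientAddGroup.quotientKerEquivRange φ).toEquiv
  have h3 : Nat.card φ.range = d / Nat.gcd d n := by
    rw [hrange, Nat.card_zmultiples, ZMod.addOrderOf_coe n hd.ne']
  rw [Nat.card_zmod, h2, h3, hker] at h1
  have hgd : Nat.gcd d n ∣ d := Nat.gcd_dvd_left d n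
  have hgpos : 0 < Nat.gcd d n := Nat.gcd_pos_of_pos_left n hd
  have hq : 0 < d / Nat.gcd d n := Nat.div_pos (Nat.le_of_dvd hd hgd) hgpos
  have : d / Nat.gcd d n * Nat.gcd d n = d := Nat.div_mul_cancel hgd
  rw [Nat.gcd_comm]
  exact (Nat.eq_of_mul_eq_mul_left hq (by rw [this, ← h1])).symm


lemma card_tor_pi {r : ℕ} (d : Fin r → ℕ) (hd : ∀ i, 0 < d i) (n : ℕ) :
    Nat.card (tor (∀ i, ZMod (d i)) n) = ∏ i, Nat.gcd n (d i) := by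
  have e : tor (∀ i, ZMod (d i)) n ≃ ∀ i, tor (ZMod (d i)) n := by
    refine (Equiv.subtypeEquivRight (q := fun f => ∀ i, f i ∈ tor (ZMod (d i)) n) ?_).trans
      (Equiv.subtypePiEquivPi)
    intro f
    simp [mem_tor, funext_iff]
  rw [Nat.card_congr e, Nat.card_pi]
  exact Finset.prod_congr rfl fun i _ => card_tor_zmod _ _ (hd i)

lemma zmod_nsmul_all (N : ℕ) (x : ZMod N) : N • x = 0 := by
  rw [nsmul_eq_mul, ZMod.natCast_self, zero_mul]

/-- In `ZMod N`, if `(N/n) • y = 0` for `n ∣ N` then `y` is a multiple of `n`. -/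
lemma zmod_exists_of_tor {N n : ℕ} (hN : 0 < N) (hn : 0 < n) (hdvd : n ∣ N) (y : ZMod N)
    (h : (N / n) • y = 0) : ∃ a : ZMod N, n • a = y := by
  haveI : NeZero N := ⟨hN.ne'⟩
  have hy : ((N / n * y.val : ℕ) : ZMod N) = 0 := by
    push_cast
    rw [← nsmul_eq_mul, ZMod.natCast_val, ZMod.cast_id, h]
  rw [ZMod.natCast_eq_zero_iff] at hy
  have hq : 0 < N / n := Nat.div_pos (Nat.le_of_dvd hN hdvd) hn
  have hnd : n ∣ y.val := by
    obtain ⟨c, hc⟩ := hy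
    obtain ⟨m, hm⟩ := hdvd
    have hmn : N / n = m := by rw [hm]; exact Nat.mul_div_cancel_left m hn
    rw [hmn] at hc
    have hm0 : 0 < m := by rw [← hmn]; exact hq
    refine ⟨c, Nat.eq_of_mul_eq_mul_left hm0 ?_⟩
    rw [hc, hm]; ring
  refine ⟨((y.val / n : ℕ) : ZMod N), ?_⟩
  rw [nsmul_eq_mul, ← Nat.cast_mul, Nat.mul_div_cancel' hnd, ZMod.natCast_val, ZMod.cast_id]

lemma card_tor_subgroup {G : Type*} [AddCommGroup G] (H : AddSubgroup G) (m : ℕ) :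
    Nat.card (tor H m) = Nat.card (H ⊓ tor G m : AddSubgroup G) := by
  apply Nat.card_congr
  refine ⟨fun a => ⟨a.1.1, a.1.2, ?_⟩, fun b => ⟨⟨b.1, b.2.1⟩, ?_⟩, fun a => rfl, fun b => rfl⟩
  · show m • (a.1.1 : G) = 0
    have h : m • a.1 = 0 := a.2
    have := congrArg (Subtype.val) h
    rwa [AddSubmonoidClass.coe_nsmul] at this
  · show m • (⟨b.1, b.2.1⟩ : H) = 0
    have h : m • (b.1 : G) = 0 := b.2.2
    exact Subtype.ext (by rwa [AddSubmonoidClass.coe_nsmul])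

lemma key_count (N r n : ℕ) (hN : 0 < N) (hn : 0 < n) (hdvd : n ∣ N)
    (H : AddSubgroup (Fin r → ZMod N)) :
    Nat.card (tor ((Fin r → ZMod N) ⧸ H) n) * Nat.card H =
      n ^ r * Nat.card (tor H (N / n)) := by
  haveI : NeZero N := ⟨hN.ne'⟩
  set G := (Fin r → ZMod N) with hG
  let π : G →+ G ⧸ H := QuotientAddGroup.mk' H
  have hπsurj : Function.Surjective π := QuotientAddGroup.mk'_surjective H
  set Q : AddSubgroup (G ⧸ H) := tor (G ⧸ H) n with hQ
  set P : AddSubgroup G := Q.comap π with hP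
  have hmemP : ∀ x : G, x ∈ P ↔ n • (π x) = 0 := fun x => Iff.rfl
  have hHP : H ≤ P := by
    intro x hx
    have hx0 : π x = 0 := (QuotientAddGroup.eq_zero_iff x).mpr hx
    rw [hmemP, hx0, smul_zero]
  -- step (a): card P = card Q * card H
  let φ : P →+ G ⧸ H := π.comp P.subtype
  have hkerφ : φ.ker = H.addSubgroupOf P := by
    ext x
    simp only [φ, AddMonoidHom.mem_ker, AddMonoidHom.comp_apply, AddSubgroup.coe_subtype,
      AddSubgroup.mem_addSubgroupOf]
    exact QuotientAddGroup.eq_zero_iff _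
  have hrangeφ : φ.range = Q := by
    ext y
    constructor
    · rintro ⟨⟨x, hx⟩, rfl⟩
      exact hx
    · intro hy
      obtain ⟨x, rfl⟩ := hπsurj y
      exact ⟨⟨x, (hmemP x).mpr hy⟩, rfl⟩
  have ha : Nat.card P = Nat.card Q * Nat.card H := by
    rw [AddSubgroup.card_eq_card_quotient_mul_card_addSubgroup (φ.ker),
      Nat.card_congr (QuotientAddGroup.quotientKerEquivRange φ).toEquiv, hrangeφ, hkerφ,
      Nat.card_congr (AddSubgroup.addSubgroupOfEquivOfLe hHP).toEquiv]
  -- step (b): card P = n ^ r * card (tor H (N/n))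
  let μ : G →+ G := AddMonoidHom.mk' (fun x => n • x) (fun a b => smul_add n a b)
  let ψ : P →+ G := μ.comp P.subtype
  have htorP : tor G n ≤ P := by
    intro x hx
    rw [hmemP, ← map_nsmul, (mem_tor).mp hx, map_zero]
  have hkerψ : ψ.ker = (tor G n).addSubgroupOf P := by
    ext x
    simp only [ψ, μ, AddMonoidHom.mem_ker, AddMonoidHom.comp_apply, AddSubgroup.coe_subtype,
      AddMonoidHom.mk'_apply, AddSubgroup.mem_addSubgroupOf]
    exact Iff.rfl
  have hNsmul : ∀ x : G, N • x = 0 := by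
    intro x
    funext i
    exact zmod_nsmul_all N (x i)
  have hrangeψ : ψ.range = H ⊓ tor G (N / n) := by
    ext y
    constructor
    · rintro ⟨⟨x, hx⟩, rfl⟩
      constructor
      · have : π (n • x) = 0 := by rw [map_nsmul]; exact (hmemP x).mp hx
        exact (QuotientAddGroup.eq_zero_iff _).mp this
      · show (N / n) • n • x = 0
        rw [smul_smul, Nat.div_mul_cancel hdvd]
        exact hNsmul x
    · rintro ⟨hyH, hyT⟩
      replace hyT : (N / n) • y = 0 := hyT
      have hcomp : ∀ i, ∃ a : ZMod N, n • a = y i := by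
        intro i
        apply zmod_exists_of_tor hN hn hdvd
        exact congrFun hyT i
      choose x hx using hcomp
      have hnx : n • x = y := funext hx
      refine ⟨⟨x, ?_⟩, hnx⟩
      have hy0 : π y = 0 := (QuotientAddGroup.eq_zero_iff y).mpr hyH
      rw [hmemP, ← map_nsmul, hnx, hy0]
  have hcardker : Nat.card ψ.ker = n ^ r := by
    rw [hkerψ, Nat.card_congr (AddSubgroup.addSubgroupOfEquivOfLe htorP).toEquiv]
    have : Nat.card (tor G n) = ∏ _i : Fin r, Nat.gcd n N :=
      card_tor_pi (fun _ => N) (fun _ => hN) n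
    rw [this, Finset.prod_const, Nat.gcd_eq_left hdvd, Finset.card_univ, Fintype.card_fin]
  have hb : Nat.card P = n ^ r * Nat.card (tor H (N / n)) := by
    rw [AddSubgroup.card_eq_card_quotient_mul_card_addSubgroup (ψ.ker),
      Nat.card_congr (QuotientAddGroup.quotientKerEquivRange ψ).toEquiv, hrangeψ, hcardker,
      card_tor_subgroup H (N / n), mul_comm]
  rw [← ha, hb]

lemma prod_dvd_eq {ι : Type*} {s : Finset ι} {f g : ι → ℕ} (hfg : ∀ i ∈ s, f i ∣ g i)
    (hg : ∀ i ∈ s, 0 < g i) (hprod : ∏ i ∈ s, f i = ∏ i ∈ s, g i) : ∀ i ∈ s, f i = g i := by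
  classical
  induction s using Finset.induction with
  | empty => intro i hi; exact absurd hi (Finset.notMem_empty i)
  | @insert a s ha ih =>
    rw [Finset.prod_insert ha, Finset.prod_insert ha] at hprod
    have hPfg : (∏ i ∈ s, f i) ∣ ∏ i ∈ s, g i :=
      Finset.prod_dvd_prod_of_dvd f g (fun i hi => hfg i (Finset.mem_insert_of_mem hi))
    have hfa : f a ∣ g a := hfg a (Finset.mem_insert_self a s)
    have hga : 0 < g a := hg a (Finset.mem_insert_self a s)
    have hPg : 0 < ∏ i ∈ s, g i :=
      Finset.prod_pos (fun i hi => hg i (Finset.mem_insert_of_mem hi))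
    obtain ⟨c, hc⟩ := hfa
    obtain ⟨d, hd⟩ := hPfg
    have hfa0 : 0 < f a := by
      rcases Nat.eq_zero_or_pos (f a) with h | h
      · rw [h, zero_mul] at hc; omega
      · exact h
    have hPf0 : 0 < ∏ i ∈ s, f i := by
      rcases Nat.eq_zero_or_pos (∏ i ∈ s, f i) with h | h
      · rw [h, zero_mul] at hd; omega
      · exact h
    have hcd : c * d = 1 := by
      have h1 : f a * (∏ i ∈ s, f i) * (c * d) = f a * (∏ i ∈ s, f i) := by
        calc f a * (∏ i ∈ s, f i) * (c * d) = (f a * c) * ((∏ i ∈ s, f i) * d) := by ring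
        _ = g a * (∏ i ∈ s, g i) := by rw [← hc, ← hd]
        _ = f a * (∏ i ∈ s, f i) := hprod.symm
      exact Nat.eq_of_mul_eq_mul_left (Nat.mul_pos hfa0 hPf0)
        (h1.trans (mul_one (f a * (∏ i ∈ s, f i))).symm)
    have hc1 : c = 1 := Nat.eq_one_of_mul_eq_one_right hcd
    have hd1 : d = 1 := Nat.eq_one_of_mul_eq_one_left hcd
    intro i hi
    rcases Finset.mem_insert.mp hi with rfl | hi'
    · rw [hc, hc1, mul_one]
    · exact ih (fun j hj => hfg j (Finset.mem_insert_of_mem hj))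
        (fun j hj => hg j (Finset.mem_insert_of_mem hj))
        (by rw [hd, hd1, mul_one]) i hi'

lemma chain_unique : ∀ (r : ℕ) (N : ℕ) (M K : Fin r → ℕ), 0 < N →
    (∀ i, 0 < M i) → (∀ i, 0 < K i) →
    (∀ i j, i ≤ j → M i ∣ M j) → (∀ i j, i ≤ j → K i ∣ K j) →
    (∀ i, M i ∣ N) → (∀ i, K i ∣ N) →
    (∀ n, 0 < n → n ∣ N → ∏ j, Nat.gcd n (M j) = ∏ j, Nat.gcd n (K j)) → M = K := by
  intro r
  induction r with
  | zero => intro N M K _ _ _ _ _ _ _ _; funext i; exact i.elim0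
  | succ r ih =>
    intro N M K hN hM hK hMc hKc hMd hKd hg
    have hprod : ∏ j, M j = ∏ j, K j := by
      have h := hg N hN dvd_rfl
      rw [Finset.prod_congr rfl (fun j _ => Nat.gcd_eq_right (hMd j)),
        Finset.prod_congr rfl (fun j _ => Nat.gcd_eq_right (hKd j))] at h
      exact h
    have keydvd : ∀ (A B : Fin (r+1) → ℕ), (∀ i, 0 < A i) → (∀ i, 0 < B i) →
        (∀ i j, i ≤ j → A i ∣ A j) → (∀ i, A i ∣ N) →
        (∀ n, 0 < n → n ∣ N → ∏ j, Nat.gcd n (A j) = ∏ j, Nat.gcd n (B j)) →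
        (∏ j, A j = ∏ j, B j) →
        B (Fin.last r) ∣ A (Fin.last r) := by
      intro A B hA hB hAc hAd hgab hab
      have h1 := hgab (A (Fin.last r)) (hA _) (hAd _)
      have e1 : ∏ j, Nat.gcd (A (Fin.last r)) (A j) = ∏ j, A j :=
        Finset.prod_congr rfl fun j _ => Nat.gcd_eq_right (hAc j (Fin.last r) (Fin.le_last j))
      have e2 : ∏ j, Nat.gcd (A (Fin.last r)) (B j) = ∏ j, B j := by
        rw [← h1, e1, hab]
      have := prod_dvd_eq (s := Finset.univ)
        (f := fun j => Nat.gcd (A (Fin.last r)) (B j)) (g := B)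
        (fun j _ => Nat.gcd_dvd_right _ _) (fun j _ => hB j) e2 (Fin.last r)
        (Finset.mem_univ _)
      exact this ▸ Nat.gcd_dvd_left _ _
    have top : M (Fin.last r) = K (Fin.last r) := by
      refine Nat.dvd_antisymm ?_ ?_
      · exact keydvd K M hK hM hKc hKd (fun n h1 h2 => (hg n h1 h2).symm) hprod.symm
      · exact keydvd M K hM hK hMc hMd hg hprod
    have htail : (fun i : Fin r => M i.castSucc) = (fun i : Fin r => K i.castSucc) := by
      refine ih N _ _ hN (fun i => hM _) (fun i => hK _)
        (fun i j hij => hMc _ _ (Fin.castSucc_le_castSucc_iff.mpr hij))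
        (fun i j hij => hKc _ _ (Fin.castSucc_le_castSucc_iff.mpr hij))
        (fun i => hMd _) (fun i => hKd _) ?_
      intro n hn hnd
      have h := hg n hn hnd
      rw [Fin.prod_univ_castSucc, Fin.prod_univ_castSucc, top] at h
      exact Nat.eq_of_mul_eq_mul_right (Nat.gcd_pos_of_pos_left _ hn) h
    funext i
    refine Fin.lastCases top (fun j => ?_) i
    exact congrFun htail j

lemma div_dvd_div_of_dvd {a b N : ℕ} (ha : 0 < a) (hab : a ∣ b) (hbN : b ∣ N) :
    N / b ∣ N / a := by
  obtain ⟨c, hc⟩ := hab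
  have hNe : N = a * (c * (N / b)) := by
    rw [← mul_assoc, ← hc, Nat.mul_div_cancel' hbN]
  refine ⟨c, Nat.div_eq_of_eq_mul_right ha ?_⟩
  conv_lhs => rw [hNe]
  ring

/-- Let `H ⊆ (ℤ/Nℤ)^r` have invariant factors `N_1 ∣ … ∣ N_r` (each dividing `N`),
and let the quotient `G/H` have invariant factors `M_1 ∣ … ∣ M_r`.  Then
`M_j = N / N_{r+1-j}` for each `j` (i.e. `M_j * N_{r+1-j} = N`); in particular
`|H| · |G/H| = N^r`. -/
theorem stmt5 (N r : ℕ) (hN : 0 < N)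
    (H : AddSubgroup (Fin r → ZMod N))
    (Ns Ms : Fin r → ℕ)
    (hNpos : ∀ i, 0 < Ns i) (hMpos : ∀ j, 0 < Ms j)
    (hNchain : ∀ i j : Fin r, i ≤ j → Ns i ∣ Ns j)
    (hMchain : ∀ i j : Fin r, i ≤ j → Ms i ∣ Ms j)
    (hNdvd : ∀ i, Ns i ∣ N)
    (hisoH : Nonempty (H ≃+ (∀ i : Fin r, ZMod (Ns i))))
    (hisoQ : Nonempty (((Fin r → ZMod N) ⧸ H) ≃+ (∀ j : Fin r, ZMod (Ms j)))) :
    (∀ j : Fin r, Ms j * Ns j.rev = N) ∧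
      Nat.card H * Nat.card ((Fin r → ZMod N) ⧸ H) = N ^ r := by
  haveI : NeZero N := ⟨hN.ne'⟩
  obtain ⟨eH⟩ := hisoH
  obtain ⟨eQ⟩ := hisoQ
  set K : Fin r → ℕ := fun j => N / Ns j.rev with hKdef
  -- `Ms j ∣ N` since the quotient is `N`-torsion
  have hMdvd : ∀ j, Ms j ∣ N := by
    intro j
    haveI : NeZero (Ms j) := ⟨(hMpos j).ne'⟩
    have htor : ∀ y : (Fin r → ZMod N) ⧸ H, N • y = 0 := by
      intro y
      induction y using QuotientAddGroup.induction_on with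
      | _ x =>
        have hx : N • x = 0 := funext (fun i => zmod_nsmul_all N (x i))
        show N • ((QuotientAddGroup.mk' H) x) = 0
        rw [← map_nsmul, hx, map_zero]
    have hz : N • (fun _ => 1 : ∀ j, ZMod (Ms j)) = 0 := by
      have h1 : eQ.symm (N • (fun _ => 1 : ∀ j, ZMod (Ms j))) = 0 := by
        rw [map_nsmul]; exact htor _
      have h2 := congrArg eQ h1
      rwa [eQ.apply_symm_apply, map_zero] at h2
    have hz' : ((N : ℕ) : ZMod (Ms j)) = 0 := by
      have := congrFun hz j
      rwa [Pi.smul_apply, Pi.zero_apply, nsmul_eq_mul, mul_one] at this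
    exact (ZMod.natCast_eq_zero_iff N (Ms j)).mp hz'
  have cardH : Nat.card H = ∏ i, Ns i := by
    rw [Nat.card_congr eH.toEquiv, Nat.card_pi]
    exact Finset.prod_congr rfl fun i _ => Nat.card_zmod _
  have cardQ : Nat.card ((Fin r → ZMod N) ⧸ H) = ∏ j, Ms j := by
    rw [Nat.card_congr eQ.toEquiv, Nat.card_pi]
    exact Finset.prod_congr rfl fun j _ => Nat.card_zmod _
  have hNsprodpos : 0 < ∏ i, Ns i := Finset.prod_pos (fun i _ => hNpos i)
  -- main gcd identity
  have hgcd : ∀ n, 0 < n → n ∣ N → ∏ j, Nat.gcd n (Ms j) = ∏ j, Nat.gcd n (K j) := by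
    intro n hn hdvd
    have hk := key_count N r n hN hn hdvd H
    rw [tor_card_congr eQ n, card_tor_pi Ms hMpos n, tor_card_congr eH (N / n),
      card_tor_pi Ns hNpos (N / n), cardH] at hk
    have step : ∀ i, n * Nat.gcd (N / n) (Ns i) = Nat.gcd n (N / Ns i) * Ns i := by
      intro i
      have h1 : n * Nat.gcd (N / n) (Ns i) = Nat.gcd (n * (N / n)) (n * Ns i) :=
        (Nat.gcd_mul_left n _ _).symm
      rw [Nat.mul_div_cancel' hdvd] at h1
      have h2 : Nat.gcd N (n * Ns i) = Nat.gcd (N / Ns i * Ns i) (n * Ns i) := by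
        rw [Nat.div_mul_cancel (hNdvd i)]
      rw [Nat.gcd_mul_right] at h2
      rw [h1, h2, Nat.gcd_comm (N / Ns i) n]
    have hrw : n ^ r * ∏ i, Nat.gcd (N / n) (Ns i) =
        (∏ i, Nat.gcd n (N / Ns i)) * ∏ i, Ns i := by
      calc n ^ r * ∏ i, Nat.gcd (N / n) (Ns i)
          = ∏ i, (n * Nat.gcd (N / n) (Ns i)) := by
            rw [Finset.prod_mul_distrib, Finset.prod_const, Finset.card_univ, Fintype.card_fin]
        _ = ∏ i, (Nat.gcd n (N / Ns i) * Ns i) := Finset.prod_congr rfl (fun i _ => step i)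
        _ = _ := Finset.prod_mul_distrib
    rw [hrw] at hk
    have heq := Nat.eq_of_mul_eq_mul_right hNsprodpos hk
    rw [heq]
    exact (Fintype.prod_bijective Fin.rev Fin.rev_bijective
      (fun j : Fin r => Nat.gcd n (N / Ns j.rev)) (fun i : Fin r => Nat.gcd n (N / Ns i))
      (fun j => rfl)).symm
  -- K properties
  have hKpos : ∀ j, 0 < K j := fun j => Nat.div_pos (Nat.le_of_dvd hN (hNdvd _)) (hNpos _)
  have hKdvd' : ∀ j, K j ∣ N := fun j => Nat.div_dvd_of_dvd (hNdvd _)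
  have hKchain : ∀ i j : Fin r, i ≤ j → K i ∣ K j := by
    intro i j hij
    exact div_dvd_div_of_dvd (hNpos _) (hNchain _ _ (Fin.rev_le_rev.mpr hij)) (hNdvd _)
  have hMK : Ms = K :=
    chain_unique r N Ms K hN hMpos hKpos hMchain hKchain hMdvd hKdvd' hgcd
  constructor
  · intro j
    rw [hMK]
    exact Nat.div_mul_cancel (hNdvd _)
  · rw [cardH, cardQ]
    have hrev : ∏ i, Ns i = ∏ j : Fin r, Ns j.rev :=
      (Fintype.prod_bijective Fin.rev Fin.rev_bijective
        (fun j : Fin r => Ns j.rev) (fun i : Fin r => Ns i) (fun j => rfl)).symm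
    rw [hrev, ← Finset.prod_mul_distrib]
    have : ∀ j : Fin r, Ns j.rev * Ms j = N := by
      intro j
      rw [hMK, mul_comm]
      exact Nat.div_mul_cancel (hNdvd _)
    rw [Finset.prod_congr rfl (fun j _ => this j), Finset.prod_const, Finset.card_univ,
      Fintype.card_fin]
end

section
/- Let (G_i) be a sequence of finite abelian groups with invariant factors N_{i,1} | ... | N_{i,r}, and let k_max be the largest index k for which (N_{i,k})_i is bounded. If (H'_i ⊆ G_i) is a sequence of subgroups such that each H'_i is generated by strictly fewer than r - k_max elements, then the indices [G_i : H'_i] are unbounded as i → ∞. -/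
/-!
Choose `i` with `n := N i kmax > L`. Keeping only the coordinates `k ≥ kmax` and reducing them
mod `n` maps `G_i` onto `(ℤ/n)^(r - kmax)`, and the index of a subgroup can only drop under a
surjection. There the image of `H'_i` is generated by fewer than `r - kmax` elements, so it has at
most `n ^ (r - kmax - 1)` elements and index at least `n`.
-/

theorem AddSubgroup.card_closure_le_pow {n : ℕ} [NeZero n] {A : Type*} [AddCommGroup A]
    [Module (ZMod n) A] (S : Finset A) :
    Nat.card (AddSubgroup.closure (S : Set A)) ≤ n ^ S.card := by
  let f := Fintype.linearCombination (ZMod n) (Subtype.val : S → A)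
  have hclosure : AddSubgroup.closure (S : Set A) ≤ (LinearMap.range f).toAddSubgroup := by
    rw [AddSubgroup.closure_le, Submodule.coe_toAddSubgroup, Fintype.range_linearCombination,
      Subtype.range_coe]
    exact Submodule.subset_span
  have : Finite (LinearMap.range f).toAddSubgroup := .of_surjective _ f.surjective_rangeRestrict
  calc Nat.card (AddSubgroup.closure (S : Set A))
      ≤ Nat.card (LinearMap.range f) := AddSubgroup.card_le_of_le hclosure
    _ ≤ Nat.card (S → ZMod n) := Nat.card_le_card_of_surjective _ f.surjective_rangeRestrict
    _ = n ^ S.card := by simp [Nat.card_fun]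

theorem AddSubgroup.le_index_closure_of_card_lt {n : ℕ} [NeZero n] {ι : Type*} [Finite ι]
    (S : Finset (ι → ZMod n)) (hS : S.card < Nat.card ι) :
    n ≤ (AddSubgroup.closure (S : Set (ι → ZMod n))).index := by
  set H := AddSubgroup.closure (S : Set (ι → ZMod n))
  have hlagrange : H.index * Nat.card H = n ^ Nat.card ι := by
    rw [H.index_mul_card, Nat.card_fun, Nat.card_zmod]
  have hn : 0 < n := Nat.pos_of_neZero n
  refine Nat.le_of_mul_le_mul_right (c := n ^ S.card) ?_ (by positivity)
  calc n * n ^ S.card = n ^ (S.card + 1) := by ring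
    _ ≤ n ^ Nat.card ι := Nat.pow_le_pow_right hn hS
    _ = H.index * Nat.card H := hlagrange.symm
    _ ≤ H.index * n ^ S.card := Nat.mul_le_mul_left _ (AddSubgroup.card_closure_le_pow S)

def ZMod.restrictCastHom {ι κ : Type*} (N : ι → ℕ) (n : ℕ) (e : κ → ι) (h : ∀ j, n ∣ N (e j)) :
    (∀ i, ZMod (N i)) →+ (κ → ZMod n) :=
  AddMonoidHom.pi fun j =>
    (ZMod.castHom (h j) (ZMod n)).toAddMonoidHom.comp (Pi.evalAddMonoidHom _ (e j))

theorem ZMod.restrictCastHom_surjective {ι κ : Type*} (N : ι → ℕ) (n : ℕ) [NeZero n]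
    {e : κ → ι} (he : Function.Injective e) (h : ∀ j, n ∣ N (e j)) :
    Function.Surjective (ZMod.restrictCastHom N n e h) := by
  intro b
  refine ⟨fun i => (Function.extend e (fun j => (b j).val) 0 i : ZMod (N i)), funext fun j => ?_⟩
  simp [ZMod.restrictCastHom, AddMonoidHom.pi_apply, he.extend_apply]

/-- Let `(G_i)` have invariant factors `N_{i,1} ∣ … ∣ N_{i,r}`, with the factors
beyond position `kmax` unbounded in `i`.  If `H'_i ⊆ G_i` are subgroups each
generated by strictly fewer than `r - kmax` elements, then the indices
`[G_i : H'_i]` are unbounded as `i → ∞`. -/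
theorem stmt7 (r kmax : ℕ)
    (N : ℕ → Fin r → ℕ) (hpos : ∀ i k, 0 < N i k)
    (hchain : ∀ i, ∀ k l : Fin r, k ≤ l → N i k ∣ N i l)
    (hunbdd : ∀ k : Fin r, kmax ≤ (k : ℕ) → ∀ C : ℕ, ∃ i, C < N i k)
    (H' : ∀ i, AddSubgroup (∀ k : Fin r, ZMod (N i k)))
    (hgen : ∀ i, ∃ S : Finset (∀ k : Fin r, ZMod (N i k)),
      S.card < r - kmax ∧
        AddSubgroup.closure (S : Set (∀ k : Fin r, ZMod (N i k))) = H' i) :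
    ∀ L : ℕ, ∃ i, L < (H' i).index := by
  intro L
  have hk : kmax < r := by
    obtain ⟨S, hS, -⟩ := hgen 0
    omega
  obtain ⟨i, hi⟩ := hunbdd ⟨kmax, hk⟩ le_rfl L
  refine ⟨i, ?_⟩
  have : ∀ k, NeZero (N i k) := fun k => ⟨(hpos i k).ne'⟩
  let e : Fin (r - kmax) → Fin r := fun j => ⟨kmax + j, by omega⟩
  have he : Function.Injective e := fun j j' hjj' => Fin.ext (by simpa [e] using hjj')
  have hdvd : ∀ j, N i ⟨kmax, hk⟩ ∣ N i (e j) := fun j =>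
    hchain i _ _ (Fin.mk_le_mk.mpr (Nat.le_add_right _ _))
  set π := ZMod.restrictCastHom (N i) _ e hdvd
  obtain ⟨S, hS, hSH⟩ := hgen i
  rw [← hSH]
  set H := AddSubgroup.closure (S : Set (∀ k, ZMod (N i k)))
  have hmap : H.map π = AddSubgroup.closure ↑(S.image π) := by
    rw [AddMonoidHom.map_closure, Finset.coe_image]
  have hcard : (S.image π).card < Nat.card (Fin (r - kmax)) := by
    simpa using Finset.card_image_le.trans_lt hS
  calc L < N i ⟨kmax, hk⟩ := hi
    _ ≤ (H.map π).index := hmap ▸ AddSubgroup.le_index_closure_of_card_lt _ hcard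
    _ ≤ H.index := Nat.le_of_dvd (Nat.pos_of_ne_zero AddSubgroup.index_ne_zero_of_finite)
        (AddSubgroup.index_map_dvd _ (ZMod.restrictCastHom_surjective _ _ he hdvd))
end

section
/- Let G be a finite abelian group with invariant factors N_1 | N_2 | ... | N_r, so that G ≅ ⊕_{i=1}^r ℤ/N_iℤ, and let H ⊆ G be a subgroup generated by fewer than r elements. Then [G : H] ≥ N_1. -/
set_option maxHeartbeats 1000000

private lemma closure_eq_span_toAddSubgroup {n : ℕ} [NeZero n] {M : Type*} [AddCommGroup M]
    [Module (ZMod n) M] (s : Set M) :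
    AddSubgroup.closure s = (Submodule.span (ZMod n) s).toAddSubgroup := by
  apply le_antisymm
  · exact (AddSubgroup.closure_le _).mpr Submodule.subset_span
  · have h2 : Submodule.span (ZMod n) s
        ≤ AddSubgroup.toZModSubmodule n (AddSubgroup.closure s) :=
      Submodule.span_le.mpr AddSubgroup.subset_closure
    exact h2

private lemma card_span_le {n : ℕ} [NeZero n] {M : Type*} [AddCommGroup M]
    [Module (ZMod n) M] (S' : Finset M) :
    Nat.card (Submodule.span (ZMod n) (S' : Set M)) ≤ n ^ S'.card := by
  have hrange : Submodule.span (ZMod n) (S' : Set M)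
      = LinearMap.range (Fintype.linearCombination (ZMod n)
          (fun a : (S' : Set M) => (a : M))) := by
    rw [Fintype.range_linearCombination, Subtype.range_coe]
  rw [hrange]
  have h1 : Nat.card (LinearMap.range (Fintype.linearCombination (ZMod n)
        (fun a : (S' : Set M) => (a : M))))
      ≤ Nat.card (↥(S' : Set M) → ZMod n) :=
    Nat.card_le_card_of_surjective _ (LinearMap.surjective_rangeRestrict _)
  have h2 : Nat.card (↥(S' : Set M) → ZMod n) = n ^ S'.card := by
    rw [Nat.card_fun, Nat.card_zmod, Nat.card_coe_set_eq, Set.ncard_coe_finset]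
  exact h2 ▸ h1

/-- Let `G ≅ ⊕_{i=1}^r ℤ/N_iℤ` with `N_1 ∣ … ∣ N_r` and let `H ⊆ G` be a subgroup
generated by fewer than `r` elements.  Then `[G : H] ≥ N_1`. -/
theorem stmt8 (r : ℕ) (hr : 0 < r)
    (Ns : Fin r → ℕ) (hpos : ∀ i, 0 < Ns i)
    (hchain : ∀ i j : Fin r, i ≤ j → Ns i ∣ Ns j)
    (H : AddSubgroup (∀ i : Fin r, ZMod (Ns i)))
    (S : Finset (∀ i : Fin r, ZMod (Ns i))) (hcard : S.card < r)
    (hgen : AddSubgroup.closure (S : Set (∀ i : Fin r, ZMod (Ns i))) = H) :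
    Ns ⟨0, hr⟩ ≤ H.index := by
  haveI : ∀ i, NeZero (Ns i) := fun i => ⟨(hpos i).ne'⟩
  set n : ℕ := Ns ⟨0, hr⟩ with hn
  haveI : NeZero n := ⟨(hpos _).ne'⟩
  have le0 : ∀ i : Fin r, (⟨0, hr⟩ : Fin r) ≤ i := fun i => Fin.le_def.mpr (Nat.zero_le _)
  -- the reduction mod n map
  let φ : (∀ i : Fin r, ZMod (Ns i)) →+ (Fin r → ZMod n) :=
    { toFun := fun x i => ZMod.castHom (hchain ⟨0, hr⟩ i (le0 i)) (ZMod n) (x i)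
      map_zero' := by ext i; simp
      map_add' := fun x y => funext fun i => map_add _ _ _ }
  have hφsurj : Function.Surjective φ := by
    intro y
    refine ⟨fun i => ((y i).val : ZMod (Ns i)), ?_⟩
    ext i
    show (ZMod.castHom (hchain ⟨0, hr⟩ i (le0 i)) (ZMod n)) (((y i).val : ZMod (Ns i))) = y i
    rw [map_natCast]
    exact ZMod.natCast_rightInverse (y i)
  set K : AddSubgroup (Fin r → ZMod n) := H.map φ with hK
  -- K.index ≤ H.index
  have hdvd : K.index ∣ H.index := AddSubgroup.index_map_dvd H hφsurj
  have hHindpos : 0 < H.index := Nat.pos_of_ne_zero (AddSubgroup.index_ne_zero_of_finite)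
  refine le_trans ?_ (Nat.le_of_dvd hHindpos hdvd)
  -- K is the closure of the image finset
  set S' : Finset (Fin r → ZMod n) := S.image φ with hS'
  have hKclos : K = AddSubgroup.closure ((S' : Finset (Fin r → ZMod n)) : Set _) := by
    rw [hK, ← hgen, AddMonoidHom.map_closure, hS', Finset.coe_image]
  have hcardK : Nat.card K ≤ n ^ S'.card := by
    rw [hKclos, closure_eq_span_toAddSubgroup (n := n)]
    exact card_span_le S'
  -- total cardinality
  have hcardT : Nat.card (Fin r → ZMod n) = n ^ r := by
    simp [Nat.card_pi, Nat.card_zmod]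
  have hmul : K.index * Nat.card K = n ^ r := by
    rw [AddSubgroup.index_mul_card, hcardT]
  -- final arithmetic
  have hs : S'.card ≤ r - 1 := le_trans (Finset.card_image_le) (by omega)
  have hcardK' : Nat.card K ≤ n ^ (r - 1) :=
    le_trans hcardK (Nat.pow_le_pow_right (hpos _) hs)
  have hKpos : 0 < Nat.card K := Nat.card_pos
  have hrpow : n ^ r = n * n ^ (r - 1) := by
    conv_lhs => rw [show r = (r - 1) + 1 by omega]
    rw [pow_succ, mul_comm]
  have hfin : n * n ^ (r - 1) ≤ K.index * n ^ (r - 1) := by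
    calc n * n ^ (r - 1) = K.index * Nat.card K := by rw [hmul, hrpow]
      _ ≤ K.index * n ^ (r - 1) := Nat.mul_le_mul_left _ hcardK'
  exact Nat.le_of_mul_le_mul_right hfin (Nat.pow_pos (n := r - 1) (hpos _))
end

section
/- Let (G_i) be a sequence of finite groups and (G'_i ⊆ G_i) a sequence of subgroups with uniformly bounded indices [G_i : G'_i] ≤ C. Then the unbounded ranks of (G'_i) and (G_i) coincide. -/
/-!
An abelian subgroup of `G'_i` of index `≤ L` is an abelian subgroup of `G_i` of index `≤ L * C`.
Conversely, if `H ≤ G_i` is abelian, `s`-generated and of index `≤ L`, then `H ∩ G'_i` has index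
`≤ L` in `G'_i`, and it is again `s`-generated: a subgroup of an `s`-generated abelian group is the
image of a subgroup of `ℤ^s`, which is free of rank `≤ s` since `ℤ` is a PID.
-/

/-- `URankLE G s` : the sequence of groups `(G i)` has unbounded rank at most `s`,
i.e. there is a constant `L` such that for infinitely many `i` there is an abelian
subgroup `H ⊆ G i`, generated by at most `s` elements, of (finite) index at most `L`. -/
def URankLE (G : ℕ → Type) [∀ i, Group (G i)] (s : ℕ) : Prop :=
  ∃ L : ℕ, {i : ℕ | ∃ H : Subgroup (G i),
      (∀ a b : H, a * b = b * a) ∧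
      (∃ S : Finset (G i), S.card ≤ s ∧ Subgroup.closure (S : Set (G i)) = H) ∧
      H.index ≠ 0 ∧ H.index ≤ L}.Infinite

open Module in
theorem Submodule.exists_finset_card_le_span_eq_of_le_span {R M : Type*} [CommRing R] [IsDomain R]
    [IsPrincipalIdealRing R] [AddCommGroup M] [Module R M] {s : Finset M} {p : Submodule R M}
    (hp : p ≤ span R s) : ∃ t : Finset M, t.card ≤ s.card ∧ span R (t : Set M) = p := by
  let φ := Fintype.linearCombination R (fun x : s => (x : M))
  let N := p.comap φ
  have hN : N.map φ = p := map_comap_eq_self <| by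
    rwa [Fintype.range_linearCombination, Subtype.range_coe_subtype, Finset.setOfPred_mem]
  have hfg : N.FG := IsNoetherian.noetherian N
  obtain ⟨t, ht, hspan⟩ := (hN ▸ hfg.map φ).exists_span_finset_card_eq_spanFinrank
  refine ⟨t, ?_, hspan⟩
  calc t.card = (N.map φ).spanFinrank := by rw [ht, hN]
    _ ≤ N.spanFinrank := spanFinrank_map_le_of_fg φ hfg
    _ = finrank R N := by rw [finrank_eq_spanFinrank_of_free, spanFinrank_top]
    _ ≤ finrank R (s → R) := N.finrank_le
    _ = s.card := by simp

theorem AddSubgroup.exists_finset_card_le_closure_eq_of_le_closure {A : Type*} [AddCommGroup A]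
    {S : Finset A} {K : AddSubgroup A} (hK : K ≤ closure S) :
    ∃ T : Finset A, T.card ≤ S.card ∧ closure (T : Set A) = K := by
  rw [← toIntSubmodule.le_iff_le, toIntSubmodule_closure] at hK
  obtain ⟨T, hT, hspan⟩ := Submodule.exists_finset_card_le_span_eq_of_le_span hK
  exact ⟨T, hT, toIntSubmodule.injective (by rw [toIntSubmodule_closure, hspan])⟩

theorem Subgroup.exists_finset_card_le_closure_eq_of_le_closure {H : Type*} [CommGroup H]
    {S : Finset H} {K : Subgroup H} (hK : K ≤ closure S) :
    ∃ T : Finset H, T.card ≤ S.card ∧ closure (T : Set H) = K := by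
  have hS : ((S.map Additive.ofMul.toEmbedding : Finset (Additive H)) : Set (Additive H)) =
      Additive.toMul ⁻¹' S := by
    rw [Finset.coe_map]; exact Additive.ofMul.image_eq_preimage_symm _
  rw [← toAddSubgroup.le_iff_le, toAddSubgroup_closure, ← hS] at hK
  obtain ⟨T, hT, hcl⟩ := AddSubgroup.exists_finset_card_le_closure_eq_of_le_closure hK
  refine ⟨T.map Additive.toMul.toEmbedding, by simpa using hT, toAddSubgroup.injective ?_⟩
  rw [toAddSubgroup_closure, Finset.coe_map, Equiv.coe_toEmbedding,
    Additive.toMul.preimage_image, hcl]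

theorem Subgroup.exists_finset_card_le_closure_eq_subgroupOf {G : Type*} [Group G]
    {P : Subgroup G} {T : Finset G} (hT : closure (T : Set G) ≤ P) :
    ∃ T' : Finset P, T'.card ≤ T.card ∧ closure (T' : Set P) = (closure T).subgroupOf P := by
  refine ⟨T.preimage P.subtype P.subtype_injective.injOn,
    Finset.card_le_card_of_injOn _ (fun _ h => Finset.mem_preimage.1 h)
      P.subtype_injective.injOn, ?_⟩
  apply map_injective P.subtype_injective
  rw [MonoidHom.map_closure, Finset.coe_preimage, Set.image_preimage_eq_of_subset,
    subgroupOf_map_subtype, inf_eq_left.2 hT]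
  simpa using subset_closure.trans hT

open IsMulCommutative in
theorem Subgroup.exists_finset_card_le_closure_eq_of_isMulCommutative {G : Type*} [Group G]
    {S : Finset G} [IsMulCommutative (closure (S : Set G))] {K : Subgroup G}
    (hK : K ≤ closure S) : ∃ T : Finset G, T.card ≤ S.card ∧ closure (T : Set G) = K := by
  classical
  set H := closure (S : Set G)
  obtain ⟨S₀, hS₀, hS₀cl⟩ := exists_finset_card_le_closure_eq_subgroupOf (le_refl H)
  rw [subgroupOf_self] at hS₀cl
  have hK₀ : K.subgroupOf H ≤ closure S₀ := hS₀cl ▸ le_top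
  obtain ⟨T₀, hT₀, hT₀cl⟩ := exists_finset_card_le_closure_eq_of_le_closure hK₀
  refine ⟨T₀.image H.subtype, Finset.card_image_le.trans (hT₀.trans hS₀), ?_⟩
  rw [Finset.coe_image, ← MonoidHom.map_closure, hT₀cl, subgroupOf_map_subtype, inf_eq_left.2 hK]

namespace Subgroup

variable {G : Type*} [Group G]

def IsAbelianOfRankIndexLE (H : Subgroup G) (s L : ℕ) : Prop :=
  (∀ a b : H, a * b = b * a) ∧
    (∃ S : Finset G, S.card ≤ s ∧ closure (S : Set G) = H) ∧ H.index ≠ 0 ∧ H.index ≤ L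

variable {s L : ℕ}

theorem IsAbelianOfRankIndexLE.map_subtype {P : Subgroup G} {H : Subgroup P}
    (hH : H.IsAbelianOfRankIndexLE s L) {C : ℕ} (hP₀ : P.index ≠ 0) (hPC : P.index ≤ C) :
    (H.map P.subtype).IsAbelianOfRankIndexLE s (L * C) := by
  classical
  obtain ⟨hcomm, ⟨S, hS, rfl⟩, hne, hle⟩ := hH
  have := isMulCommutative_iff.2 hcomm
  rw [IsAbelianOfRankIndexLE, index_map_subtype]
  exact ⟨isMulCommutative_iff.1 inferInstance, ⟨S.image P.subtype,
    Finset.card_image_le.trans hS, by rw [Finset.coe_image, MonoidHom.map_closure]⟩,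
    mul_ne_zero hne hP₀, Nat.mul_le_mul hle hPC⟩

theorem IsAbelianOfRankIndexLE.subgroupOf {H : Subgroup G} (hH : H.IsAbelianOfRankIndexLE s L)
    (P : Subgroup G) : (H.subgroupOf P).IsAbelianOfRankIndexLE s L := by
  obtain ⟨hcomm, ⟨S, hS, rfl⟩, hne, hle⟩ := hH
  have := isMulCommutative_iff.2 hcomm
  obtain ⟨T, hT, hTcl⟩ :=
    exists_finset_card_le_closure_eq_of_isMulCommutative (inf_le_left : closure S ⊓ P ≤ _)
  obtain ⟨T', hT', hT'cl⟩ := exists_finset_card_le_closure_eq_subgroupOf (hTcl ▸ inf_le_right)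
  refine ⟨isMulCommutative_iff.1 inferInstance,
    ⟨T', hT'.trans (hT.trans hS), by rw [hT'cl, hTcl, inf_subgroupOf_right]⟩,
    mt index_eq_zero_of_relIndex_eq_zero hne, ?_⟩
  rw [← relIndex_top_right] at hne hle
  exact (relIndex_le_of_le_right le_top hne).trans hle

end Subgroup

theorem uRankLE_iff {G : ℕ → Type} [∀ i, Group (G i)] {s : ℕ} :
    URankLE G s ↔ ∃ L, {i | ∃ H : Subgroup (G i), H.IsAbelianOfRankIndexLE s L}.Infinite :=
  Iff.rfl

theorem URankLE.of_subgroup {G : ℕ → Type} [∀ i, Group (G i)] {G' : ∀ i, Subgroup (G i)}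
    {C s : ℕ} (h : URankLE (fun i => G' i) s) (hG'₀ : ∀ i, (G' i).index ≠ 0)
    (hG'C : ∀ i, (G' i).index ≤ C) : URankLE G s := by
  obtain ⟨L, hL⟩ := uRankLE_iff.1 h
  refine ⟨L * C, hL.mono ?_⟩
  rintro i ⟨H, hH⟩
  exact ⟨_, hH.map_subtype (hG'₀ i) (hG'C i)⟩

theorem URankLE.subgroup {G : ℕ → Type} [∀ i, Group (G i)] (G' : ∀ i, Subgroup (G i)) {s : ℕ}
    (h : URankLE G s) : URankLE (fun i => G' i) s := by
  obtain ⟨L, hL⟩ := uRankLE_iff.1 h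
  refine ⟨L, hL.mono ?_⟩
  rintro i ⟨H, hH⟩
  exact ⟨_, hH.subgroupOf (G' i)⟩

/-- If `(G'_i ⊆ G_i)` is a sequence of subgroups of uniformly bounded index, then the
unbounded ranks of `(G'_i)` and `(G_i)` coincide. -/
theorem stmt15 (G : ℕ → Type) [∀ i, Group (G i)] [∀ i, Fintype (G i)]
    (G' : ∀ i, Subgroup (G i)) (C : ℕ) (hbdd : ∀ i, (G' i).index ≤ C) :
    sInf {s : ℕ | URankLE (fun i => ↥(G' i)) s} = sInf {s : ℕ | URankLE G s} := by
  congr 1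
  ext s
  exact ⟨fun h => h.of_subgroup (fun _ => Subgroup.index_ne_zero_of_finite) hbdd,
    URankLE.subgroup G'⟩
end
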